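/- arXiv:2005.06285 — 3 statements merged into one kernel-verified Lean document; each statement's English description precedes it below -/
import Mathlib

section
/- For every pushdown system P = (Q, Γ, A, Δ), every linked pair (α, β), and every configuration qαβ^eγ of P with e ≥ 1: if qαβ^{e−d}γ ≁ qαβ^ω for all d ∈ [1, e], then (1) there exists a β^ω-avoiding digging sequence (r₀) of length one for (q, α, β), and (2) every β^ω-avoiding digging sequence (r₀, r₁, …, r_h) for (q, α, β) with h < e can be extended by a control state r_{h+1} to yield a longer β^ω-avoiding digging sequence (r₀, …, r_h, r_{h+1}) for (q, α, β). -/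
/-- Stack contents: finite (a list in `Γ*`) or infinite (a stream, used for `αβ^ω`). -/
def SC (Γ : Type) : Type := List Γ ⊕ Stream' Γ

namespace SC

/-- Put one symbol on top of a stack content. -/
def cons {Γ : Type} (X : Γ) : SC Γ → SC Γ
  | Sum.inl l => Sum.inl (X :: l)
  | Sum.inr s => Sum.inr (Stream'.cons X s)

/-- Put a finite word on top of a stack content. -/
def push {Γ : Type} (γ : List Γ) : SC Γ → SC Γ
  | Sum.inl l => Sum.inl (γ ++ l)
  | Sum.inr s => Sum.inr (Stream'.appendStream' γ s)

end SC

/-- `listPow β i = β^i`, the `i`-fold concatenation of `β`. -/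
def listPow {Γ : Type} (β : List Γ) : ℕ → List Γ
  | 0 => []
  | n + 1 => β ++ listPow β n

/-- The infinite stack content `β^ω` (for nonempty `β`). -/
def cycSC {Γ : Type} (β : List Γ) (h : β ≠ []) : SC Γ := Sum.inr (Stream'.cycle β h)

/-- A pushdown system, given by its (finite) transition relation
`Δ ⊆ Q × Γ × A × Q × Γ*`. -/
structure PDS (Q Γ A : Type) where
  Δ : Finset (Q × Γ × A × Q × List Γ)

namespace PDS

variable {Q Γ A : Type}

/-- The size `|P| = |Q| + |Γ| + |A| + |Δ|` of a pushdown system. -/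
def size (P : PDS Q Γ A) [Fintype Q] [Fintype Γ] [Fintype A] : ℕ :=
  Fintype.card Q + Fintype.card Γ + Fintype.card A + P.Δ.card

/-- Push-pop normal form: every transition pushes a word of length at most 2. -/
def PushPop (P : PDS Q Γ A) : Prop := ∀ δ ∈ P.Δ, δ.2.2.2.2.length ≤ 2

/-- The `a`-labeled step relation on configurations: `pXσ →_a qγσ`. -/
def Step (P : PDS Q Γ A) (a : A) (s t : Q × SC Γ) : Prop :=
  ∃ p X q γ σ, (p, X, a, q, γ) ∈ P.Δ ∧ s = (p, SC.cons X σ) ∧ t = (q, SC.push γ σ)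

/-- A step with some label. -/
def StepAny (P : PDS Q Γ A) (s t : Q × SC Γ) : Prop := ∃ a, P.Step a s t

/-- Reachability `→*`. -/
def Reach (P : PDS Q Γ A) : (Q × SC Γ) → (Q × SC Γ) → Prop :=
  Relation.ReflTransGen P.StepAny

/-- `StepN P n s t` : there is a path of length exactly `n` from `s` to `t`. -/
def StepN (P : PDS Q Γ A) : ℕ → (Q × SC Γ) → (Q × SC Γ) → Prop
  | 0, s, t => s = t
  | n + 1, s, t => ∃ u, P.StepAny s u ∧ StepN P n u t

/-- `R` is a bisimulation. -/
def IsBisim (P : PDS Q Γ A) (R : (Q × SC Γ) → (Q × SC Γ) → Prop) : Prop :=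
  ∀ s t, R s t → ∀ a,
    (∀ s', P.Step a s s' → ∃ t', P.Step a t t' ∧ R s' t') ∧
    (∀ t', P.Step a t t' → ∃ s', P.Step a s s' ∧ R s' t')

/-- Bisimilarity `s ∼ t`. -/
def Bisim (P : PDS Q Γ A) (s t : Q × SC Γ) : Prop := ∃ R, P.IsBisim R ∧ R s t

/-- `eats_α(T) = { r | ∃ q ∈ T, qα →* r }`. -/
def eats (P : PDS Q Γ A) (α : List Γ) (T : Set Q) : Set Q :=
  {r | ∃ q ∈ T, P.Reach (q, Sum.inl α) (r, Sum.inl ([] : List Γ))}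

/-- `(α, β)` (with `β` nonempty) is a linked pair if `eats_α = eats_{αβ}`
and `eats_β = eats_{ββ}`. -/
def LinkedPair (P : PDS Q Γ A) (α β : List Γ) : Prop :=
  β ≠ [] ∧ P.eats α = P.eats (α ++ β) ∧ P.eats β = P.eats (β ++ β)

/-- Applying one concrete transition `δ = (p, X, a, q, γ)`. -/
def TStep (P : PDS Q Γ A) (δ : Q × Γ × A × Q × List Γ) (s t : Q × SC Γ) : Prop :=
  δ ∈ P.Δ ∧ ∃ σ, s = (δ.1, SC.cons δ.2.1 σ) ∧ t = (δ.2.2.2.1, SC.push δ.2.2.2.2 σ)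

/-- `RunTo P ρ s t` : applying the sequence of transitions `ρ` starting from `s`
yields `t`. -/
def RunTo (P : PDS Q Γ A) : List (Q × Γ × A × Q × List Γ) → (Q × SC Γ) → (Q × SC Γ) → Prop
  | [], s, t => s = t
  | δ :: ρ, s, t => ∃ u, P.TStep δ s u ∧ RunTo P ρ u t

/-- Bisimulation classes of configurations reachable from `s₀`
(the states of the bisimulation quotient of `L(P, s₀)`). -/
def classes (P : PDS Q Γ A) (s₀ : Q × SC Γ) : Set (Set (Q × SC Γ)) :=
  {c | ∃ s, P.Reach s₀ s ∧ c = {t | P.Reach s₀ t ∧ P.Bisim s t}}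

/-- The `a`-labeled step relation on bisimulation classes. -/
def classStep (P : PDS Q Γ A) (a : A) (c d : Set (Q × SC Γ)) : Prop :=
  ∃ s ∈ c, ∃ t ∈ d, P.Step a s t

end PDS

/-- `StackGrowth` of a single transition: `|γ| − 1`. -/
def tGrowth {Q Γ A : Type} (δ : Q × Γ × A × Q × List Γ) : ℤ := (δ.2.2.2.2.length : ℤ) - 1

/-- `StackGrowth` of a run. -/
def runGrowth {Q Γ A : Type} (ρ : List (Q × Γ × A × Q × List Γ)) : ℤ := (ρ.map tGrowth).sum

/-- A run is augmenting if every prefix has nonnegative stack growth. -/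
def Augmenting {Q Γ A : Type} (ρ : List (Q × Γ × A × Q × List Γ)) : Prop :=
  ∀ i ≤ ρ.length, 0 ≤ runGrowth (ρ.take i)

/-- A digging sequence `(r 0, …, r h)` for `(q, α, β)`. -/
def DiggingSeq {Q Γ A : Type} (P : PDS Q Γ A) (q : Q) (α β : List Γ)
    (h : ℕ) (r : ℕ → Q) : Prop :=
  r 0 ∈ P.eats α {q} ∧ ∀ d, 1 ≤ d → d ≤ h → r d ∈ P.eats β {r (d - 1)}

/-- A `β^ω`-avoiding digging sequence `(r 0, …, r h)` for `(q, α, β)`,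
with respect to the configuration `qαβ^eγ` (where `e ≥ 1`). -/
def Avoiding {Q Γ A : Type} (P : PDS Q Γ A) (q : Q) (α β γ : List Γ) (hβ : β ≠ [])
    (e h : ℕ) (r : ℕ → Q) : Prop :=
  DiggingSeq P q α β h r ∧
  (∃ r' ∈ P.eats β {r 0},
      ¬ P.Bisim (r', Sum.inl (listPow β (e - 1) ++ γ)) (r', cycSC β hβ)) ∧
  ∀ d, 1 ≤ d → d ≤ h →
    ¬ P.Bisim (r d, Sum.inl (listPow β (e - d) ++ γ)) (r d, cycSC β hβ)

/-- The class of elementary functions `ℕ^k → ℕ`: the smallest class containing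
constants, projections, addition, multiplication and exponentiation, and closed
under composition. -/
inductive ElementaryFun : {k : ℕ} → ((Fin k → ℕ) → ℕ) → Prop
  | const {k : ℕ} (c : ℕ) : ElementaryFun (fun _ : Fin k → ℕ => c)
  | proj {k : ℕ} (i : Fin k) : ElementaryFun (fun v : Fin k → ℕ => v i)
  | add : ElementaryFun (fun v : Fin 2 → ℕ => v 0 + v 1)
  | mul : ElementaryFun (fun v : Fin 2 → ℕ => v 0 * v 1)
  | exp : ElementaryFun (fun v : Fin 2 → ℕ => v 0 ^ v 1)
  | comp {k m : ℕ} (f : (Fin m → ℕ) → ℕ) (g : Fin m → (Fin k → ℕ) → ℕ) :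
      ElementaryFun f → (∀ i, ElementaryFun (g i)) →
      ElementaryFun (fun v : Fin k → ℕ => f (fun i => g i v))

/-- A binary function `ℕ² → ℕ` is elementary. -/
def Elementary2 (φ : ℕ → ℕ → ℕ) : Prop :=
  ElementaryFun (fun v : Fin 2 → ℕ => φ (v 0) (v 1))

/-- A ternary function `ℕ³ → ℕ` is elementary. -/
def Elementary3 (φ : ℕ → ℕ → ℕ → ℕ) : Prop :=
  ElementaryFun (fun v : Fin 3 → ℕ => φ (v 0) (v 1) (v 2))

/-- `prodSeg w i len = w (i+1) * w (i+2) * ⋯ * w (i+len+1)` in a semigroup. -/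
def prodSeg {S : Type} [Semigroup S] (w : ℕ → S) (i : ℕ) : ℕ → S
  | 0 => w (i + 1)
  | len + 1 => prodSeg w i len * w (i + len + 2)

/-- `catSeg α i len = α (i+1) ++ α (i+2) ++ ⋯ ++ α (i+len+1)`. -/
def catSeg {Γ : Type} (α : ℕ → List Γ) (i : ℕ) : ℕ → List Γ
  | 0 => α (i + 1)
  | len + 1 => catSeg α i len ++ α (i + len + 2)

/-! Bisimilarity is a congruence for finite stack prefixes: if every state `r` in which a run
of `p` can pop all of `θ` satisfies `rμ ∼ rν`, then `pθμ ∼ pθν`, because until `θ` is popped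
both sides take the same transitions. Contrapositively, a non-bisimilarity `pθμ ≁ pθν` is
inherited by some state of `eats_θ(p)`. Applied with `θ = β` to `r_h β^{e-h}γ ≁ r_h β^ω`
(note `β β^ω = β^ω`) this yields the next state of an avoiding digging sequence; for the
first one, `qαβ^{e-1}γ ≁ qαβ^ω` gives a state of `eats_α(q) = eats_{αβ}(q)`, and a run popping
`αβ` passes through a state `r₀` just after popping `α`. -/

namespace SC

variable {Γ : Type}

theorem push_nil (μ : SC Γ) : push [] μ = μ := by
  cases μ <;> simp only [push, List.nil_append, Stream'.nil_append_stream] <;> rfl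

theorem push_append (γ θ : List Γ) (μ : SC Γ) : push (γ ++ θ) μ = push γ (push θ μ) := by
  cases μ <;> simp only [push, List.append_assoc, Stream'.append_append_stream] <;> rfl

theorem push_cons (X : Γ) (θ : List Γ) (μ : SC Γ) : push (X :: θ) μ = cons X (push θ μ) := by
  cases μ <;> simp only [push, cons, List.cons_append, Stream'.cons_append_stream] <;> rfl

theorem push_inl (γ θ : List Γ) : push γ (Sum.inl θ) = Sum.inl (γ ++ θ) := rfl

theorem cons_inj {X Y : Γ} {σ τ : SC Γ} : cons X σ = cons Y τ ↔ X = Y ∧ σ = τ := by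
  refine ⟨fun h => ?_, by rintro ⟨rfl, rfl⟩; rfl⟩
  match σ, τ, h with
  | Sum.inl _, Sum.inl _, h =>
    obtain ⟨rfl, rfl⟩ := List.cons.inj (Sum.inl.inj h)
    exact ⟨rfl, rfl⟩
  | Sum.inr _, Sum.inr _, h =>
    obtain ⟨rfl, rfl⟩ := Stream'.cons_injective2 (Sum.inr.inj h)
    exact ⟨rfl, rfl⟩

theorem cons_ne_nil (X : Γ) (σ : SC Γ) : cons X σ ≠ Sum.inl [] := by
  cases σ <;> nofun

end SC

theorem push_cycSC {Γ : Type} {β : List Γ} (hβ : β ≠ []) : SC.push β (cycSC β hβ) = cycSC β hβ :=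
  congrArg Sum.inr (Stream'.cycle_eq β hβ).symm

theorem push_listPow_append {Γ : Type} (β γ : List Γ) (n : ℕ) :
    SC.push β (Sum.inl (listPow β n ++ γ)) = Sum.inl (listPow β (n + 1) ++ γ) := by
  simp only [SC.push, listPow, List.append_assoc]
  rfl

namespace PDS

variable {Q Γ A : Type} {P : PDS Q Γ A}

theorem step_cons_iff {a : A} {p : Q} {X : Γ} {σ : SC Γ} {t : Q × SC Γ} :
    P.Step a (p, SC.cons X σ) t ↔ ∃ q γ, (p, X, a, q, γ) ∈ P.Δ ∧ t = (q, SC.push γ σ) := by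
  constructor
  · rintro ⟨p', X', q, γ, σ', hδ, hs, rfl⟩
    obtain ⟨rfl, hcons⟩ := Prod.mk.inj hs
    obtain ⟨rfl, rfl⟩ := SC.cons_inj.mp hcons
    exact ⟨q, γ, hδ, rfl⟩
  · rintro ⟨q, γ, hδ, rfl⟩
    exact ⟨p, X, q, γ, σ, hδ, rfl, rfl⟩

theorem step_inl_iff {a : A} {p : Q} {θ : List Γ} {t : Q × SC Γ} :
    P.Step a (p, Sum.inl θ) t ↔
      ∃ X τ q γ, θ = X :: τ ∧ (p, X, a, q, γ) ∈ P.Δ ∧ t = (q, Sum.inl (γ ++ τ)) := by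
  cases θ with
  | nil =>
    simp only [reduceCtorEq, false_and, exists_false, iff_false]
    rintro ⟨_, _, _, _, σ, _, hs, _⟩
    exact SC.cons_ne_nil _ σ (Prod.mk.inj hs).2.symm
  | cons X τ =>
    refine (step_cons_iff (σ := Sum.inl τ)).trans ?_
    constructor
    · rintro ⟨q, γ, hδ, rfl⟩
      exact ⟨X, τ, q, γ, rfl, hδ, rfl⟩
    · rintro ⟨_, _, q, γ, hθ, hδ, rfl⟩
      obtain ⟨rfl, rfl⟩ := List.cons.inj hθ
      exact ⟨q, γ, hδ, rfl⟩

theorem mem_eats_singleton {θ : List Γ} {p r : Q} :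
    r ∈ P.eats θ {p} ↔ P.Reach (p, Sum.inl θ) (r, Sum.inl []) := by
  simp [eats]

theorem mem_eats_of_step {a : A} {p q r : Q} {X : Γ} {γ θ : List Γ}
    (hδ : (p, X, a, q, γ) ∈ P.Δ) (hr : r ∈ P.eats (γ ++ θ) {q}) : r ∈ P.eats (X :: θ) {p} := by
  rw [mem_eats_singleton] at hr ⊢
  exact .head ⟨a, step_inl_iff.mpr ⟨X, θ, q, γ, rfl, hδ, rfl⟩⟩ hr

theorem exists_mem_eats_of_mem_eats_append {θ₁ θ₂ : List Γ} {p r : Q}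
    (h : r ∈ P.eats (θ₁ ++ θ₂) {p}) : ∃ r₀ ∈ P.eats θ₁ {p}, r ∈ P.eats θ₂ {r₀} := by
  simp only [mem_eats_singleton] at h ⊢
  generalize hs : ((p, Sum.inl (θ₁ ++ θ₂)) : Q × SC Γ) = s at h
  induction h using Relation.ReflTransGen.head_induction_on generalizing p θ₁ with
  | refl =>
    obtain ⟨rfl, hθ⟩ := Prod.mk.inj hs
    obtain ⟨rfl, rfl⟩ := List.append_eq_nil_iff.mp (Sum.inl.inj hθ)
    exact ⟨p, .refl, .refl⟩
  | head hstep hrest ih =>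
    subst hs
    cases θ₁ with
    | nil => exact ⟨p, .refl, .head hstep hrest⟩
    | cons X τ =>
      obtain ⟨a, hstep⟩ := hstep
      obtain ⟨_, _, q, γ, ⟨rfl, rfl⟩, hδ, rfl⟩ := step_inl_iff.mp hstep
      obtain ⟨r₀, h₁, h₂⟩ := ih (θ₁ := γ ++ τ) (p := q) (by simp only [List.append_assoc]; rfl)
      exact ⟨r₀, .head ⟨a, step_inl_iff.mpr ⟨X, τ, q, γ, rfl, hδ, rfl⟩⟩ h₁, h₂⟩

theorem isBisim_bisim : P.IsBisim P.Bisim := by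
  rintro s t ⟨R, hR, hst⟩ a
  refine ⟨fun s' hs' => ?_, fun t' ht' => ?_⟩
  · obtain ⟨t', ht', hR'⟩ := (hR s t hst a).1 s' hs'
    exact ⟨t', ht', R, hR, hR'⟩
  · obtain ⟨s', hs', hR'⟩ := (hR s t hst a).2 t' ht'
    exact ⟨s', hs', R, hR, hR'⟩

/-- Bisimulation up to bisimilarity. -/
theorem bisim_of_progress (R : Q × SC Γ → Q × SC Γ → Prop)
    (hR : ∀ s t, R s t → ∀ a,
      (∀ s', P.Step a s s' → ∃ t', P.Step a t t' ∧ (R s' t' ∨ P.Bisim s' t')) ∧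
      (∀ t', P.Step a t t' → ∃ s', P.Step a s s' ∧ (R s' t' ∨ P.Bisim s' t')))
    {s t : Q × SC Γ} (hst : R s t) : P.Bisim s t := by
  refine ⟨fun s t => R s t ∨ P.Bisim s t, ?_, .inl hst⟩
  rintro s t (hst | hst) a
  · exact hR s t hst a
  · obtain ⟨h₁, h₂⟩ := isBisim_bisim s t hst a
    refine ⟨fun s' hs' => ?_, fun t' ht' => ?_⟩
    · obtain ⟨t', ht', h⟩ := h₁ s' hs'
      exact ⟨t', ht', .inr h⟩
    · obtain ⟨s', hs', h⟩ := h₂ t' ht'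
      exact ⟨s', hs', .inr h⟩

theorem bisim_push_of_forall_mem_eats {μ ν : SC Γ} {θ : List Γ} {p : Q}
    (H : ∀ r ∈ P.eats θ {p}, P.Bisim (r, μ) (r, ν)) :
    P.Bisim (p, SC.push θ μ) (p, SC.push θ ν) := by
  refine bisim_of_progress (fun s t => ∃ θ p, (∀ r ∈ P.eats θ {p}, P.Bisim (r, μ) (r, ν)) ∧
    s = (p, SC.push θ μ) ∧ t = (p, SC.push θ ν)) ?_ ⟨θ, p, H, rfl, rfl⟩
  rintro _ _ ⟨θ, p, H, rfl, rfl⟩ a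
  cases θ with
  | nil =>
    rw [SC.push_nil, SC.push_nil]
    have hp := isBisim_bisim _ _ (H p (mem_eats_singleton.mpr .refl)) a
    exact ⟨fun s' hs' => (hp.1 s' hs').imp fun _ => .imp_right .inr,
      fun t' ht' => (hp.2 t' ht').imp fun _ => .imp_right .inr⟩
  | cons X τ =>
    simp only [SC.push_cons, step_cons_iff]
    constructor
    all_goals
      rintro _ ⟨q, γ, hδ, rfl⟩
      refine ⟨_, ⟨q, γ, hδ, rfl⟩, .inl ⟨γ ++ τ, q, ?_, by rw [SC.push_append],
        by rw [SC.push_append]⟩⟩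
      exact fun r hr => H r (mem_eats_of_step hδ hr)

theorem exists_mem_eats_not_bisim {μ ν : SC Γ} {θ : List Γ} {p : Q}
    (h : ¬ P.Bisim (p, SC.push θ μ) (p, SC.push θ ν)) :
    ∃ r ∈ P.eats θ {p}, ¬ P.Bisim (r, μ) (r, ν) := by
  by_contra! H
  exact h (bisim_push_of_forall_mem_eats H)

end PDS

open PDS

section Avoiding

variable {Q Γ A : Type} {P : PDS Q Γ A} {q : Q} {α β γ : List Γ} {hβ : β ≠ []} {e : ℕ}

theorem exists_avoiding_zero (hα : P.eats α = P.eats (α ++ β))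
    (hq : ¬ P.Bisim (q, Sum.inl (α ++ listPow β (e - 1) ++ γ)) (q, SC.push α (cycSC β hβ))) :
    ∃ r : ℕ → Q, Avoiding P q α β γ hβ e 0 r := by
  rw [List.append_assoc, ← SC.push_inl] at hq
  obtain ⟨r, hr, hnot⟩ := exists_mem_eats_not_bisim hq
  rw [hα] at hr
  obtain ⟨r₀, hr₀, hr₀r⟩ := exists_mem_eats_of_mem_eats_append hr
  exact ⟨fun _ => r₀, ⟨hr₀, by omega⟩, ⟨r, hr₀r, hnot⟩, by omega⟩

theorem Avoiding.extend {h : ℕ} {r : ℕ → Q} (hr : Avoiding P q α β γ hβ e h r) {rN : Q}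
    (hrN : rN ∈ P.eats β {r h})
    (hnot : ¬ P.Bisim (rN, Sum.inl (listPow β (e - (h + 1)) ++ γ)) (rN, cycSC β hβ)) :
    Avoiding P q α β γ hβ e (h + 1) (fun d => if d ≤ h then r d else rN) := by
  obtain ⟨⟨hr₀, hdig⟩, hfirst, hrest⟩ := hr
  refine ⟨⟨by simpa using hr₀, fun d hd₁ hd₂ => ?_⟩, by simpa using hfirst, fun d hd₁ hd₂ => ?_⟩
  · rcases Nat.lt_or_eq_of_le hd₂ with hd | rfl
    · simpa [Nat.le_of_lt_succ hd, show d - 1 ≤ h by omega] using hdig d hd₁ (by omega)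
    · simpa using hrN
  · rcases Nat.lt_or_eq_of_le hd₂ with hd | rfl
    · simpa [Nat.le_of_lt_succ hd] using hrest d hd₁ (by omega)
    · simpa using hnot

theorem Avoiding.exists_extend {h : ℕ} {r : ℕ → Q} (hr : Avoiding P q α β γ hβ e h r)
    (he : h < e) : ∃ rN ∈ P.eats β {r h},
      ¬ P.Bisim (rN, Sum.inl (listPow β (e - (h + 1)) ++ γ)) (rN, cycSC β hβ) := by
  obtain _ | h := h
  · exact hr.2.1
  · have hnot := hr.2.2 (h + 1) (by omega) le_rfl
    rw [show e - (h + 1) = e - (h + 1 + 1) + 1 by omega, ← push_listPow_append,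
      ← push_cycSC hβ] at hnot
    exact exists_mem_eats_not_bisim hnot

end Avoiding

/-- If `qαβ^{e−d}γ ≁ qαβ^ω` for all `d ∈ [1, e]` (where `(α, β)` is a linked pair and
`e ≥ 1`), then (1) there exists a `β^ω`-avoiding digging sequence of length one for
`(q, α, β)`, and (2) every `β^ω`-avoiding digging sequence `(r₀, …, r_h)` with `h < e`
can be extended by one control state to a longer `β^ω`-avoiding digging sequence. -/
theorem stmt_13 (Q Γ A : Type) (P : PDS Q Γ A) (q : Q) (α β γ : List Γ) (hβ : β ≠ [])
    (hlp : P.LinkedPair α β) (e : ℕ) (he : 1 ≤ e)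
    (hnotbis : ∀ d, 1 ≤ d → d ≤ e →
      ¬ P.Bisim (q, Sum.inl (α ++ listPow β (e - d) ++ γ)) (q, SC.push α (cycSC β hβ))) :
    (∃ r : ℕ → Q, Avoiding P q α β γ hβ e 0 r) ∧
    (∀ (h : ℕ) (r : ℕ → Q), Avoiding P q α β γ hβ e h r → h < e →
      ∃ rN : Q, Avoiding P q α β γ hβ e (h + 1) (fun d => if d ≤ h then r d else rN)) := by
  refine ⟨exists_avoiding_zero hlp.2.1 (hnotbis 1 le_rfl he), fun h r hr hh => ?_⟩
  obtain ⟨rN, hrN, hnot⟩ := hr.exists_extend hh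
  exact ⟨rN, hr.extend hrN hnot⟩
end

section
/- For every pushdown system P = (Q, Γ, A, Δ) in push-pop normal form, setting g(|P|, |α|, |β|, k) = (|α| + |β|) · |P|^{k+2}: for every linked pair (α, β), every q ∈ Q, every k ∈ ℕ, and every run η starting from the configuration qαβ^ω that visits more than g(|P|, |α|, |β|, k) distinct configurations, there exists a contiguous subrun η₁η₂⋯η_k of η such that all of η₁, …, η_k are augmenting and nonempty. -/
/-! The stack growth of a run in push-pop normal form rises by at most one per transition. If
some infix of `η` has growth at least `k`, cut it after a prefix of minimal growth: the rest is
augmenting, its first transition has growth at most one, and what follows that transition still has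
growth at least `k - 1`, so induction yields the `k` parts. Otherwise every visited configuration is
`r w σ` with `σ` a suffix of `αβ^ω` and `|w| ≤ k`, since `w` was pushed after the lowest stack level
reached so far. As `αβ^ω` has at most `|α| + |β|` distinct suffixes, at most
`|Q| · (|Γ| + 1)^k · (|α| + |β|) ≤ (|α| + |β|) · |P|^(k+2)` configurations are visited. -/

section Growth

variable {Q Γ A : Type}

theorem runGrowth_nil : runGrowth ([] : List (Q × Γ × A × Q × List Γ)) = 0 := rfl

theorem runGrowth_cons (δ : Q × Γ × A × Q × List Γ) (ρ : List (Q × Γ × A × Q × List Γ)) :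
    runGrowth (δ :: ρ) = tGrowth δ + runGrowth ρ := by
  simp [runGrowth]

theorem runGrowth_append (ρ₁ ρ₂ : List (Q × Γ × A × Q × List Γ)) :
    runGrowth (ρ₁ ++ ρ₂) = runGrowth ρ₁ + runGrowth ρ₂ := by
  simp [runGrowth]

theorem augmenting_iff_forall_prefix {ρ : List (Q × Γ × A × Q × List Γ)} :
    Augmenting ρ ↔ ∀ σ, σ <+: ρ → 0 ≤ runGrowth σ := by
  refine ⟨fun h σ hσ => ?_, fun h i _ => h _ (List.take_prefix i ρ)⟩
  rw [List.prefix_iff_eq_take.1 hσ]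
  exact h _ hσ.length_le

theorem exists_augmenting_suffix (ρ : List (Q × Γ × A × Q × List Γ)) :
    ∃ ρ₀ ρ', ρ = ρ₀ ++ ρ' ∧ Augmenting ρ' ∧ runGrowth ρ ≤ runGrowth ρ' := by
  classical
  obtain ⟨ρ₀, hρ₀, hmin⟩ :=
    ρ.inits.toFinset.exists_min_image runGrowth ⟨[], by simp⟩
  simp only [List.mem_toFinset, List.mem_inits] at hρ₀ hmin
  obtain ⟨ρ', rfl⟩ := hρ₀
  refine ⟨ρ₀, ρ', rfl, augmenting_iff_forall_prefix.2 fun σ hσ => ?_, ?_⟩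
  · have := hmin (ρ₀ ++ σ) ((List.prefix_append_right_inj ρ₀).2 hσ)
    rw [runGrowth_append] at this
    omega
  · have := hmin [] List.nil_prefix
    rw [runGrowth_nil] at this
    rw [runGrowth_append]
    omega

theorem exists_augmenting_parts_of_le_runGrowth (k : ℕ) (ρ : List (Q × Γ × A × Q × List Γ))
    (hstep : ∀ δ ∈ ρ, tGrowth δ ≤ 1) (hk : (k : ℤ) ≤ runGrowth ρ) :
    ∃ (ρ₀ ρ₂ : List (Q × Γ × A × Q × List Γ)) (parts : List (List (Q × Γ × A × Q × List Γ))),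
      ρ = ρ₀ ++ parts.foldr (· ++ ·) [] ++ ρ₂ ∧
      parts.length = k ∧
      ∀ part ∈ parts, Augmenting part ∧ part ≠ [] := by
  induction k generalizing ρ with
  | zero => exact ⟨ρ, [], [], by simp, rfl, by simp⟩
  | succ k ih =>
    obtain ⟨ρ₀, ρ', rfl, hρ', hle⟩ := exists_augmenting_suffix ρ
    obtain _ | ⟨δ, ρ''⟩ := ρ'
    · rw [runGrowth_nil] at hle
      omega
    have hδ : tGrowth δ ≤ 1 := hstep δ (by simp)
    rw [runGrowth_cons] at hle
    obtain ⟨σ₀, σ₂, parts, rfl, hlen, hparts⟩ :=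
      ih ρ'' (fun δ' hδ' => hstep δ' (by simp [hδ'])) (by push_cast at hk; omega)
    refine ⟨ρ₀, σ₂, (δ :: σ₀) :: parts, by simp, by simp [hlen], ?_⟩
    rintro part (_ | ⟨_, hpart⟩)
    · refine ⟨augmenting_iff_forall_prefix.2 fun σ hσ => ?_, List.cons_ne_nil _ _⟩
      exact augmenting_iff_forall_prefix.1 hρ' σ (hσ.trans (by simp))
    · exact hparts part hpart

end Growth

theorem Stream'.drop_add_length_cycle {Γ : Type} (β : List Γ) (hβ : β ≠ []) (n : ℕ) :
    (Stream'.cycle β hβ).drop (n + β.length) = (Stream'.cycle β hβ).drop n := by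
  conv_lhs => rw [Stream'.cycle_eq]
  rw [Nat.add_comm, ← Stream'.drop_drop, Stream'.drop_append_stream]

theorem Stream'.exists_drop_eq_drop_append_cycle {Γ : Type} (α β : List Γ) (hβ : β ≠ [])
    (d : ℕ) : ∃ d' < α.length + β.length,
      (α ++ₛ Stream'.cycle β hβ).drop d' = (α ++ₛ Stream'.cycle β hβ).drop d := by
  induction d using Nat.strong_induction_on with
  | _ d ih =>
    by_cases hd : d < α.length + β.length
    · exact ⟨d, hd, rfl⟩
    obtain ⟨d', hd', heq⟩ := ih (d - β.length) (by have := List.length_pos_iff.2 hβ; omega)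
    refine ⟨d', hd', heq.trans ?_⟩
    have hdrop : ∀ m, (α ++ₛ Stream'.cycle β hβ).drop (m + α.length) = (Stream'.cycle β hβ).drop m :=
      fun m => by rw [Nat.add_comm, ← Stream'.drop_drop, Stream'.drop_append_stream]
    obtain ⟨m, rfl⟩ : ∃ m, d = m + β.length + α.length := ⟨d - β.length - α.length, by omega⟩
    rw [show m + β.length + α.length - β.length = m + α.length by omega, hdrop, hdrop,
      Stream'.drop_add_length_cycle]

theorem List.reduceOption_ofFn_getElem? {γ : Type} {w : List γ} {k : ℕ} (hw : w.length ≤ k) :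
    (List.ofFn fun i : Fin k => w[(i : ℕ)]?).reduceOption = w := by
  have hpad : (List.ofFn fun i : Fin k => w[(i : ℕ)]?)
      = w.map some ++ List.replicate (k - w.length) none :=
    List.ext_getElem? fun i => by grind
  rw [hpad, List.reduceOption_append, List.reduceOption_replicate_none, List.append_nil]
  simp [List.reduceOption]

theorem card_le_of_forall_eq_append_drop {Q Γ : Type} [Fintype Q] [Fintype Γ] (x : Stream' Γ)
    (k n : ℕ) (hx : ∀ d, ∃ d' < n, x.drop d' = x.drop d) (T : Finset (Q × SC Γ))
    (hT : ∀ c ∈ T, ∃ r w d, w.length ≤ k ∧ c = (r, (Sum.inr (w ++ₛ x.drop d) : SC Γ))) :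
    T.card ≤ Fintype.card Q * (Fintype.card Γ + 1) ^ k * n := by
  classical
  -- a word of length at most `k` is recovered from its first `k` entries, read as options
  let decode : Q × (Fin k → Option Γ) × Fin n → Q × SC Γ :=
    fun v => (v.1, Sum.inr ((List.ofFn v.2.1).reduceOption ++ₛ x.drop v.2.2))
  calc T.card ≤ (Finset.univ : Finset (Q × (Fin k → Option Γ) × Fin n)).card := by
        refine Finset.card_le_card_of_surjOn decode fun c hc => ?_
        obtain ⟨r, w, d, hw, rfl⟩ := hT c hc
        obtain ⟨d', hd', hdrop⟩ := hx d
        exact ⟨(r, fun i => w[(i : ℕ)]?, ⟨d', hd'⟩), by simp,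
          by dsimp only [decode]; rw [List.reduceOption_ofFn_getElem? hw, hdrop]; rfl⟩
    _ = Fintype.card Q * (Fintype.card Γ + 1) ^ k * n := by
        simp [Finset.card_univ, mul_assoc]

namespace PDS

variable {Q Γ A : Type}

theorem card_mul_pow_le_size_pow [Fintype Q] [Fintype Γ] [Fintype A] (P : PDS Q Γ A) (k : ℕ) :
    Fintype.card Q * (Fintype.card Γ + 1) ^ k ≤ P.size ^ (k + 1) := by
  rcases Nat.eq_zero_or_pos (Fintype.card Q) with hQ | hQ
  · simp [hQ]
  rw [pow_succ']
  unfold size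
  exact Nat.mul_le_mul (by omega) (Nat.pow_le_pow_left (by omega) k)

variable {P : PDS Q Γ A}

theorem PushPop.tGrowth_le_one (hpp : P.PushPop) {δ : Q × Γ × A × Q × List Γ} (hδ : δ ∈ P.Δ) :
    tGrowth δ ≤ 1 := by
  have := hpp δ hδ
  unfold tGrowth
  omega

theorem runTo_append {ρ₁ ρ₂ : List (Q × Γ × A × Q × List Γ)} {s t : Q × SC Γ} :
    P.RunTo (ρ₁ ++ ρ₂) s t ↔ ∃ u, P.RunTo ρ₁ s u ∧ P.RunTo ρ₂ u t := by
  induction ρ₁ generalizing s with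
  | nil => simp [RunTo]
  | cons δ ρ ih => simp only [List.cons_append, RunTo, ih]; aesop

theorem runTo_append_singleton {ρ : List (Q × Γ × A × Q × List Γ)} {δ} {s t : Q × SC Γ} :
    P.RunTo (ρ ++ [δ]) s t ↔ ∃ u, P.RunTo ρ s u ∧ P.TStep δ u t := by
  simp [runTo_append, RunTo]

theorem RunTo.mem {ρ : List (Q × Γ × A × Q × List Γ)} {s t : Q × SC Γ} (h : P.RunTo ρ s t)
    {δ} (hδ : δ ∈ ρ) : δ ∈ P.Δ := by
  induction ρ generalizing s with
  | nil => simp at hδ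
  | cons δ' ρ ih =>
    obtain ⟨u, hu, hρ⟩ := h
    rcases List.mem_cons.1 hδ with rfl | hδ
    · exact hu.1
    · exact ih hρ hδ

theorem TStep.exists_of_inr {δ : Q × Γ × A × Q × List Γ} {p : Q} {x : Stream' Γ}
    {c : Q × SC Γ} (h : P.TStep δ (p, Sum.inr x) c) :
    ∃ τ, x = Stream'.cons δ.2.1 τ ∧ c = (δ.2.2.2.1, Sum.inr (δ.2.2.2.2 ++ₛ τ)) := by
  obtain ⟨-, σ | τ, hs, rfl⟩ := h
  · simp [SC.cons, Prod.ext_iff] at hs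
  · exact ⟨τ, Sum.inr.inj (congrArg Prod.snd hs), rfl⟩

/-- `w` is what was pushed since the stack was last at its lowest level; the `+ 1` is the symbol
of `x` replaced by the first of these pushes. -/
theorem RunTo.exists_stack_eq_append_drop {ρ : List (Q × Γ × A × Q × List Γ)} {q : Q}
    {x : Stream' Γ} {c : Q × SC Γ} (h : P.RunTo ρ (q, Sum.inr x) c) :
    ∃ r w d, c = (r, Sum.inr (w ++ₛ x.drop d)) ∧
      ∃ ρ₂, ρ₂ <:+ ρ ∧ (w.length : ℤ) ≤ runGrowth ρ₂ + 1 := by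
  induction ρ using List.reverseRecOn generalizing c with
  | nil =>
    exact ⟨q, [], 0, h.symm, [], List.nil_suffix, by simp [runGrowth_nil]⟩
  | append_singleton ρ δ ih =>
    obtain ⟨u, hu, hδ⟩ := runTo_append_singleton.1 h
    obtain ⟨r, w, d, rfl, ρ₂, ⟨ρ₁, rfl⟩, hw⟩ := ih hu
    obtain ⟨τ, hτ, rfl⟩ := hδ.exists_of_inr
    cases w with
    | nil =>
      refine ⟨δ.2.2.2.1, δ.2.2.2.2, d + 1, ?_, [δ], List.suffix_append _ _, ?_⟩
      · have hdrop : x.drop (d + 1) = τ := by simpa using congrArg Stream'.tail hτ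
        rw [hdrop]
      · simp [runGrowth_cons, runGrowth_nil, tGrowth]
    | cons Y w =>
      refine ⟨δ.2.2.2.1, δ.2.2.2.2 ++ w, d, ?_, ρ₂ ++ [δ], ⟨ρ₁, by simp⟩, ?_⟩
      · have hdrop : w ++ₛ x.drop d = τ := by
          simpa [Stream'.cons_append_stream] using congrArg Stream'.tail hτ
        rw [← hdrop, Stream'.append_append_stream]
      · rw [runGrowth_append, runGrowth_cons, runGrowth_nil]
        simp only [tGrowth, List.length_cons, List.length_append] at hw ⊢
        push_cast at hw ⊢
        omega

end PDS

theorem stmt_15_general (Q Γ A : Type) [Fintype Q] [Fintype Γ] [Fintype A]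
    (P : PDS Q Γ A) (hpp : P.PushPop) (q : Q) (α β : List Γ) (hβ : β ≠ [])
    (k : ℕ)
    (η : List (Q × Γ × A × Q × List Γ)) (sfin : Q × SC Γ)
    (hrun : P.RunTo η (q, SC.push α (cycSC β hβ)) sfin)
    (hvisits : ∃ T : Finset (Q × SC Γ),
      T.card > (α.length + β.length) * P.size ^ (k + 2) ∧
      ∀ c ∈ T, ∃ i ≤ η.length, P.RunTo (η.take i) (q, SC.push α (cycSC β hβ)) c) :
    ∃ (ρ₀ ρ₂ : List (Q × Γ × A × Q × List Γ)) (parts : List (List (Q × Γ × A × Q × List Γ))),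
      η = ρ₀ ++ parts.foldr (· ++ ·) [] ++ ρ₂ ∧
      parts.length = k ∧
      ∀ part ∈ parts, Augmenting part ∧ part ≠ [] := by
  obtain ⟨T, hTcard, hT⟩ := hvisits
  by_cases hrise : ∃ ρ, ρ <:+: η ∧ (k : ℤ) ≤ runGrowth ρ
  · obtain ⟨ρ, ⟨u, v, rfl⟩, hρ⟩ := hrise
    obtain ⟨ρ₀, ρ₂, parts, rfl, hlen, hparts⟩ := exists_augmenting_parts_of_le_runGrowth k ρ
      (fun δ hδ => hpp.tGrowth_le_one (hrun.mem (by simp [hδ]))) hρ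
    exact ⟨u ++ ρ₀, ρ₂ ++ v, parts, by simp, hlen, hparts⟩
  push Not at hrise
  have hshort : ∀ c ∈ T, ∃ r w d, w.length ≤ k ∧
      c = (r, (Sum.inr (w ++ₛ (α ++ₛ Stream'.cycle β hβ).drop d) : SC Γ)) := by
    intro c hc
    obtain ⟨i, -, hi⟩ := hT c hc
    obtain ⟨r, w, d, rfl, ρ₂, hsuf, hw⟩ := PDS.RunTo.exists_stack_eq_append_drop hi
    have := hrise ρ₂ (hsuf.isInfix.trans (List.take_prefix i η).isInfix)
    exact ⟨r, w, d, by omega, rfl⟩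
  have hsize : 0 < P.size := (Fintype.card_pos_iff.2 ⟨q⟩).trans_le (by unfold PDS.size; omega)
  have hcount := card_le_of_forall_eq_append_drop _ k _
    (Stream'.exists_drop_eq_drop_append_cycle α β hβ) T hshort
  have hbound : Fintype.card Q * (Fintype.card Γ + 1) ^ k ≤ P.size ^ (k + 2) :=
    (P.card_mul_pow_le_size_pow k).trans (Nat.pow_le_pow_right hsize (Nat.le_succ _))
  have := Nat.mul_le_mul_right (α.length + β.length) hbound
  linarith

/-- With `g |P| |α| |β| k = (|α| + |β|) · |P|^(k+2)`: every run `η` from `qαβ^ω`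
(`(α, β)` a linked pair) that visits more than `g |P| |α| |β| k` distinct
configurations contains a contiguous subrun that is a concatenation of `k`
nonempty augmenting runs. -/
theorem stmt_15 (Q Γ A : Type) [Fintype Q] [Fintype Γ] [Fintype A]
    (P : PDS Q Γ A) (hpp : P.PushPop) (q : Q) (α β : List Γ) (hβ : β ≠ [])
    (hlp : P.LinkedPair α β) (k : ℕ)
    (η : List (Q × Γ × A × Q × List Γ)) (sfin : Q × SC Γ)
    (hrun : P.RunTo η (q, SC.push α (cycSC β hβ)) sfin)
    (hvisits : ∃ T : Finset (Q × SC Γ),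
      T.card > (α.length + β.length) * P.size ^ (k + 2) ∧
      ∀ c ∈ T, ∃ i ≤ η.length, P.RunTo (η.take i) (q, SC.push α (cycSC β hβ)) c) :
    ∃ (ρ₀ ρ₂ : List (Q × Γ × A × Q × List Γ)) (parts : List (List (Q × Γ × A × Q × List Γ))),
      η = ρ₀ ++ parts.foldr (· ++ ·) [] ++ ρ₂ ∧
      parts.length = k ∧
      ∀ part ∈ parts, Augmenting part ∧ part ≠ [] :=
  stmt_15_general Q Γ A P hpp q α β hβ k η sfin hrun hvisits
end

section
/- Let (S, ∘) be a finite semigroup and let s₁s₂⋯sₙ ∈ S* be a word with n ≥ 2^{9·|S|}. Then there exist indices j, k with 1 ≤ j < k ≤ 2^{9·|S|} such that the product s_{j+1} ∘ ⋯ ∘ s_k is an idempotent (i.e., equal to its own square) and s₁ ∘ ⋯ ∘ s_j = s₁ ∘ ⋯ ∘ s_k. -/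
/-!
Among the positions `1, …, 2^(9|S|)`, by pigeonhole more than `2^|S|` share the same prefix
product. Attach to each such position `j` its future set `V j`: the products
`s_{j+1} ∘ ⋯ ∘ s_k` over later positions `k` of this family. A second pigeonhole, on subsets
of `S`, gives `j < j'` with `V j = V j'`. Then `t = s_{j+1} ∘ ⋯ ∘ s_{j'}` lies in `V j'` and
`t ∘ V j' ⊆ V j = V j'`, and a set with this property contains an idempotent.
-/

open Finset

section Idempotent

variable {S : Type*} [Semigroup S]

/-- The elements `x ∈ V` with `x * V ⊆ V` form a subsemigroup containing `t`; a finite semigroup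
has an idempotent, here obtained by Ellis' lemma for the discrete topology. -/
theorem exists_idempotent_mem_of_mul_left_mem [Finite S] {V : Set S} {t : S} (ht : t ∈ V)
    (htV : ∀ x ∈ V, t * x ∈ V) : ∃ e ∈ V, e * e = e := by
  let _ : TopologicalSpace S := ⊥
  have : DiscreteTopology S := ⟨rfl⟩
  let T : Set S := {x | x ∈ V ∧ ∀ y ∈ V, x * y ∈ V}
  have hT : ∀ x ∈ T, ∀ y ∈ T, x * y ∈ T := fun x hx y hy =>
    ⟨hx.2 y hy.1, fun z hz => by simpa only [mul_assoc] using hx.2 _ (hy.2 z hz)⟩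
  obtain ⟨e, he, hee⟩ := exists_idempotent_in_compact_subsemigroup
    (fun _ => continuous_of_discreteTopology) T ⟨t, ht, htV⟩ T.toFinite.isCompact hT
  exact ⟨e, he.1, hee⟩

theorem exists_lt_mul_self_eq_of_mul_eq [Fintype S] {ι : Type*} [LinearOrder ι]
    (c : ι → ι → S)
    (hc : ∀ i j k, i < j → j < k → c i j * c j k = c i k) {F : Finset ι}
    (hF : 2 ^ Fintype.card S < #F) : ∃ j ∈ F, ∃ k ∈ F, j < k ∧ c j k * c j k = c j k := by
  classical
  let V : ι → Set S := fun j => {x | ∃ k ∈ F, j < k ∧ c j k = x}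
  have hcard : #(univ : Finset (Set S)) < #F := by rwa [card_univ, Fintype.card_set]
  obtain ⟨j₁, hj₁, j₂, hj₂, hne, hV⟩ :=
    exists_ne_map_eq_of_card_lt_of_maps_to hcard fun j _ => mem_univ (V j)
  obtain ⟨j, hj, j', hj', hjj', hV⟩ : ∃ j ∈ F, ∃ j' ∈ F, j < j' ∧ V j = V j' := by
    rcases hne.lt_or_gt with h | h
    exacts [⟨j₁, hj₁, j₂, hj₂, h, hV⟩, ⟨j₂, hj₂, j₁, hj₁, h, hV.symm⟩]
  have ht : c j j' ∈ V j' := hV ▸ ⟨j', hj', hjj', rfl⟩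
  have htV : ∀ x ∈ V j', c j j' * x ∈ V j' := by
    rintro _ ⟨k, hk, hj'k, rfl⟩
    exact hV ▸ ⟨k, hk, hjj'.trans hj'k, (hc j j' k hjj' hj'k).symm⟩
  obtain ⟨_, ⟨k, hk, hj'k, rfl⟩, hidem⟩ := exists_idempotent_mem_of_mul_left_mem ht htV
  exact ⟨j', hj', k, hk, hj'k, hidem⟩

end Idempotent

section Segments

variable {S : Type} [Semigroup S]

/-- `segProd w i j = w (i+1) * ⋯ * w j`, the paper's `s_{i+1} ∘ ⋯ ∘ s_j`;
junk unless `i < j`. -/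
def segProd (w : ℕ → S) (i j : ℕ) : S := prodSeg w i (j - i - 1)

theorem prodSeg_mul_prodSeg (w : ℕ → S) (i l₁ : ℕ) :
    ∀ l₂, prodSeg w i l₁ * prodSeg w (i + l₁ + 1) l₂ = prodSeg w i (l₁ + l₂ + 1)
  | 0 => rfl
  | l₂ + 1 => by
    rw [prodSeg, ← mul_assoc, prodSeg_mul_prodSeg w i l₁ l₂]
    show _ = prodSeg w i (l₁ + l₂ + 1) * w (i + (l₁ + l₂ + 1) + 2)
    congr 2
    omega

theorem segProd_mul_segProd (w : ℕ → S) {i j k : ℕ} (hij : i < j) (hjk : j < k) :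
    segProd w i j * segProd w j k = segProd w i k := by
  obtain ⟨l₁, rfl⟩ : ∃ l₁, j = i + l₁ + 1 := ⟨j - i - 1, by omega⟩
  obtain ⟨l₂, rfl⟩ : ∃ l₂, k = i + l₁ + 1 + l₂ + 1 := ⟨k - (i + l₁ + 1) - 1, by omega⟩
  simp only [segProd, prodSeg_mul_prodSeg, show i + l₁ + 1 - i - 1 = l₁ by omega,
    show i + l₁ + 1 + l₂ + 1 - (i + l₁ + 1) - 1 = l₂ by omega,
    show i + l₁ + 1 + l₂ + 1 - i - 1 = l₁ + l₂ + 1 by omega]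

end Segments

theorem mul_two_pow_lt_two_pow_nine_mul (m : ℕ) : m * 2 ^ m < 2 ^ (9 * m) :=
  calc m * 2 ^ m < 2 ^ m * 2 ^ m := Nat.mul_lt_mul_of_pos_right m.lt_two_pow_self (by positivity)
    _ = 2 ^ (2 * m) := by ring
    _ ≤ 2 ^ (9 * m) := Nat.pow_le_pow_right two_pos (by omega)

theorem stmt_16_general (S : Type) [Semigroup S] [Fintype S] (w : ℕ → S) :
    ∃ j k : ℕ, 1 ≤ j ∧ j < k ∧ k ≤ 2 ^ (9 * Fintype.card S) ∧
      prodSeg w j (k - j - 1) * prodSeg w j (k - j - 1) = prodSeg w j (k - j - 1) ∧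
      prodSeg w 0 (j - 1) = prodSeg w 0 (k - 1) := by
  classical
  set N := 2 ^ (9 * Fintype.card S)
  have hcard : #(univ : Finset S) * 2 ^ Fintype.card S < #(Icc 1 N) := by
    simpa only [card_univ, Nat.card_Icc, Nat.add_sub_cancel] using
      mul_two_pow_lt_two_pow_nine_mul (Fintype.card S)
  obtain ⟨q, -, hq⟩ := exists_lt_card_fiber_of_mul_lt_card_of_maps_to
    (fun k _ => mem_univ (segProd w 0 k)) hcard
  obtain ⟨j, hj, k, hk, hjk, hidem⟩ :=
    exists_lt_mul_self_eq_of_mul_eq (segProd w) (fun _ _ _ => segProd_mul_segProd w) hq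
  simp only [mem_filter, mem_Icc] at hj hk
  exact ⟨j, k, hj.1.1, hjk, hk.1.2, hidem, hj.2.trans hk.2.symm⟩

/-- For a finite semigroup `S` and a word `s₁ ⋯ sₙ` over `S` with `n ≥ 2^(9·|S|)`,
there exist `1 ≤ j < k ≤ 2^(9·|S|)` such that `s_{j+1} ∘ ⋯ ∘ s_k` is an idempotent
and `s₁ ∘ ⋯ ∘ s_j = s₁ ∘ ⋯ ∘ s_k`. -/
theorem stmt_16 (S : Type) [Semigroup S] [Fintype S] (w : ℕ → S) (n : ℕ)
    (hn : n ≥ 2 ^ (9 * Fintype.card S)) :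
    ∃ j k : ℕ, 1 ≤ j ∧ j < k ∧ k ≤ 2 ^ (9 * Fintype.card S) ∧
      prodSeg w j (k - j - 1) * prodSeg w j (k - j - 1) = prodSeg w j (k - j - 1) ∧
      prodSeg w 0 (j - 1) = prodSeg w 0 (k - 1) :=
  stmt_16_general S w
end
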